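/- arXiv:2203.15664 — 3 statements merged into one kernel-verified Lean document; each statement's English description precedes it below -/
import Mathlib

section
/- Let θ, θ̂ ∈ ℝ^d be nonzero vectors with ‖θ‖ = 1, and let a = θ̂ / ‖θ̂‖ be the unit vector maximizing ⟨a', θ̂⟩ over the unit ball. Then 1 − ⟨a, θ⟩ ≤ 2‖θ̂ − θ‖². -/
open RealInnerProductSpace

theorem stmt_0 {d : ℕ} (θ θh : EuclideanSpace ℝ (Fin d))
    (hθ : ‖θ‖ = 1) (hθh : θh ≠ 0) (a : EuclideanSpace ℝ (Fin d))
    (ha : a = ‖θh‖⁻¹ • θh) :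
    1 - ⟪a, θ⟫ ≤ 2 * ‖θh - θ‖ ^ 2 := by
  have hn : ‖θh‖ ≠ 0 := norm_ne_zero_iff.mpr hθh
  have hA : ‖a‖ = 1 := by
    rw [ha, norm_smul, norm_inv, norm_norm, inv_mul_cancel₀ hn]
  -- ‖a - θh‖ = |1 - ‖θh‖|
  have h1 : ‖a - θh‖ = |1 - ‖θh‖| := by
    have : a - θh = (‖θh‖⁻¹ - 1) • θh := by rw [ha, sub_smul, one_smul]
    rw [this, norm_smul, Real.norm_eq_abs]
    rw [show ‖θh‖⁻¹ - 1 = (1 - ‖θh‖) * ‖θh‖⁻¹ by field_simp]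
    rw [abs_mul, abs_inv, abs_norm, mul_assoc, inv_mul_cancel₀ hn, mul_one]
  have h2 : |1 - ‖θh‖| ≤ ‖θh - θ‖ := by
    have := abs_norm_sub_norm_le θ θh
    rw [hθ] at this
    calc |1 - ‖θh‖| = |‖θ‖ - ‖θh‖| := by rw [hθ]
      _ ≤ ‖θ - θh‖ := abs_norm_sub_norm_le θ θh
      _ = ‖θh - θ‖ := norm_sub_rev _ _
  have h3 : ‖a - θ‖ ≤ 2 * ‖θh - θ‖ := by
    calc ‖a - θ‖ = ‖(a - θh) + (θh - θ)‖ := by rw [sub_add_sub_cancel]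
      _ ≤ ‖a - θh‖ + ‖θh - θ‖ := norm_add_le _ _
      _ ≤ ‖θh - θ‖ + ‖θh - θ‖ := by rw [h1]; linarith
      _ = 2 * ‖θh - θ‖ := by ring
  have hsq : ‖a - θ‖ ^ 2 ≤ (2 * ‖θh - θ‖) ^ 2 :=
    pow_le_pow_left₀ (norm_nonneg _) h3 2
  have hexp : ‖a - θ‖ ^ 2 = 2 - 2 * ⟪a, θ⟫ := by
    rw [@norm_sub_sq_real, hA, hθ]; ring
  nlinarith [hsq, hexp]
end

section
/- Let x₁, …, x_n ∈ ℝ^d satisfy ‖x_i‖² ≤ λ for all i, with λ > 0, and define Λ_i = λ·I + Σ_{j=1}^{i} x_j x_j^⊤. Then Σ_{i=1}^{n} min{1, x_i^⊤ Λ_{i-1}^{-1} x_i} ≤ 2·ln( det(Λ_n) / det(Λ_0) ). -/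
open Matrix

private lemma min_le_two_log {u : ℝ} (hu : 0 ≤ u) : min 1 u ≤ 2 * Real.log (1 + u) := by
  have h1u : (0:ℝ) < 1 + u := by linarith
  have hkey : u / (1 + u) ≤ Real.log (1 + u) := by
    have := Real.log_le_sub_one_of_pos (x := (1 + u)⁻¹) (by positivity)
    rw [Real.log_inv] at this
    have h2 : (1 + u)⁻¹ - 1 = -(u / (1 + u)) := by field_simp; ring
    linarith [h2 ▸ this]
  rcases le_total u 1 with h | h
  · rw [min_eq_right h]
    have h2 : u / 2 ≤ u / (1 + u) := by
      rw [div_le_div_iff₀ (by norm_num) h1u]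
      nlinarith
    linarith
  · rw [min_eq_left h]
    have hlog2 : (1:ℝ) / 2 ≤ Real.log 2 := by
      have := Real.log_le_sub_one_of_pos (x := (2:ℝ)⁻¹) (by norm_num)
      rw [Real.log_inv] at this
      norm_num at this
      linarith
    have : Real.log 2 ≤ Real.log (1 + u) :=
      Real.log_le_log (by norm_num) (by linarith)
    linarith

theorem stmt_11 {d n : ℕ} (lam : ℝ) (hlam : 0 < lam)
    (x : Fin n → (Fin d → ℝ))
    (hx : ∀ i, ∑ j, (x i j) ^ 2 ≤ lam)
    (Λ : ℕ → Matrix (Fin d) (Fin d) ℝ)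
    (hΛ : ∀ i, Λ i = lam • (1 : Matrix (Fin d) (Fin d) ℝ) +
      ∑ j ∈ Finset.univ.filter (fun j : Fin n => (j : ℕ) < i), vecMulVec (x j) (x j)) :
    ∑ i : Fin n, min 1 (x i ⬝ᵥ ((Λ i)⁻¹ *ᵥ x i)) ≤
      2 * Real.log ((Λ n).det / (Λ 0).det) := by
  classical
  -- positive definiteness of every Λ i
  have hPSD : ∀ s : Finset (Fin n),
      PosSemidef (∑ j ∈ s, vecMulVec (x j) (x j)) := by
    intro s
    refine Finset.sum_induction _ _ (fun A B hA hB => hA.add hB) PosSemidef.zero ?_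
    intro j _
    have hv : vecMulVec (x j) (x j)
        = replicateCol (Fin 1) (x j) * (replicateCol (Fin 1) (x j))ᴴ := by
      ext a b
      simp [vecMulVec_apply, Matrix.mul_apply]
    rw [hv]
    exact posSemidef_self_mul_conjTranspose _
  have hPD : ∀ i : ℕ, (Λ i).PosDef := by
    intro i
    rw [hΛ i]
    refine Matrix.PosDef.add_posSemidef ?_ (hPSD _)
    rw [smul_one_eq_diagonal]
    exact Matrix.PosDef.diagonal fun _ => hlam
  have hdetpos : ∀ i : ℕ, 0 < (Λ i).det := fun i => (hPD i).det_pos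
  set u : Fin n → ℝ := fun i => x i ⬝ᵥ ((Λ i)⁻¹ *ᵥ x i) with hudef
  have hu0 : ∀ i, 0 ≤ u i := by
    intro i
    have h := ((hPD i).inv).posSemidef.dotProduct_mulVec_nonneg (x i)
    simpa using h
  -- determinant recursion
  have hdet : ∀ i : Fin n, (Λ ((i : ℕ) + 1)).det = (Λ (i : ℕ)).det * (1 + u i) := by
    intro i
    have hstep : Λ ((i : ℕ) + 1)
        = Λ (i : ℕ) + replicateCol (Fin 1) (x i) * replicateRow (Fin 1) (x i) := by
      erw [hΛ ((i : ℕ) + 1), hΛ (i : ℕ), ← vecMulVec_eq (Fin 1) (x i) (x i)]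
      have hfilter : (Finset.univ.filter fun j : Fin n => (j : ℕ) < (i : ℕ) + 1)
          = insert i (Finset.univ.filter fun j : Fin n => (j : ℕ) < (i : ℕ)) := by
        ext j
        simp only [Finset.mem_insert, Finset.mem_filter, Finset.mem_univ, true_and,
          Fin.ext_iff]
        omega
      rw [hfilter, Finset.sum_insert (by simp)]
      abel
    have hA : IsUnit (Λ (i : ℕ)).det := isUnit_iff_ne_zero.mpr (hdetpos _).ne'
    have h2 : Λ (i : ℕ) + replicateCol (Fin 1) (x i) * replicateRow (Fin 1) (x i)
        = Λ (i : ℕ) * (1 + replicateCol (Fin 1) ((Λ (i : ℕ))⁻¹ *ᵥ x i) * replicateRow (Fin 1) (x i)) := by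
      rw [Matrix.mul_add, Matrix.mul_one, ← Matrix.mul_assoc, ← replicateCol_mulVec, mulVec_mulVec,
        Matrix.mul_nonsing_inv _ hA, one_mulVec]
    erw [hstep, h2, det_mul, det_one_add_replicateCol_mul_replicateRow (ι := Fin 1) ((Λ (i : ℕ))⁻¹ *ᵥ x i) (x i)]
  -- logs
  have hlog : ∀ i : Fin n,
      Real.log (1 + u i)
        = Real.log ((Λ ((i : ℕ) + 1)).det) - Real.log ((Λ (i : ℕ)).det) := by
    intro i
    have h1u : (0:ℝ) < 1 + u i := by linarith [hu0 i]
    rw [hdet i, Real.log_mul (hdetpos _).ne' h1u.ne']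
    ring
  calc ∑ i : Fin n, min 1 (u i)
      ≤ ∑ i : Fin n, 2 * Real.log (1 + u i) :=
        Finset.sum_le_sum fun i _ => min_le_two_log (hu0 i)
    _ = 2 * ∑ i : Fin n,
        (Real.log ((Λ ((i : ℕ) + 1)).det) - Real.log ((Λ (i : ℕ)).det)) := by
        rw [Finset.mul_sum]
        exact Finset.sum_congr rfl fun i _ => by rw [hlog i]
    _ = 2 * (Real.log ((Λ n).det) - Real.log ((Λ 0).det)) := by
        rw [Fin.sum_univ_eq_sum_range
          (fun i => Real.log ((Λ (i + 1)).det) - Real.log ((Λ i).det)) n,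
          Finset.sum_range_sub (fun i => Real.log ((Λ i).det))]
    _ = 2 * Real.log ((Λ n).det / (Λ 0).det) := by
        rw [Real.log_div (hdetpos n).ne' (hdetpos 0).ne']
end

section
/- Let P be an orthogonal projection on ℝ^d, θ ∈ ℝ^d with ‖θ‖ = 1, and θ̃ ∈ ℝ^d with ‖θ̃ − Pθ‖ ≤ ε and ‖θ̃‖ ≥ 1 − ε for some ε ∈ [0, 1/2]. Then ‖θ − θ̃‖ ≤ √(6ε). -/
theorem stmt_17 {d : ℕ} (K : Submodule ℝ (EuclideanSpace ℝ (Fin d)))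
    (θ θt : EuclideanSpace ℝ (Fin d)) (hθ : ‖θ‖ = 1)
    (ε : ℝ) (hε0 : 0 ≤ ε) (hε1 : ε ≤ 1 / 2)
    (h1 : ‖θt - (K.orthogonalProjectionOnto θ : EuclideanSpace ℝ (Fin d))‖ ≤ ε)
    (h2 : 1 - ε ≤ ‖θt‖) :
    ‖θ - θt‖ ≤ Real.sqrt (6 * ε) := by
  set p : EuclideanSpace ℝ (Fin d) := (K.orthogonalProjectionOnto θ : EuclideanSpace ℝ (Fin d)) with hp
  have hinner : (inner ℝ (θ - p) p : ℝ) = 0 :=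
    Submodule.starProjection_inner_eq_zero θ p (K.orthogonalProjectionOnto θ).2
  have hpyth : ‖θ‖ ^ 2 = ‖θ - p‖ ^ 2 + ‖p‖ ^ 2 := by
    have := norm_add_sq_real (θ - p) p
    rw [sub_add_cancel, hinner] at this
    linarith
  have hpnorm : 1 - 2 * ε ≤ ‖p‖ := by
    have := norm_sub_norm_le θt p
    linarith
  have ha : ‖θ - p‖ ^ 2 ≤ 4 * ε - 4 * ε ^ 2 := by
    have h2' : (1 - 2 * ε) ^ 2 ≤ ‖p‖ ^ 2 := by
      apply sq_le_sq' <;> nlinarith [norm_nonneg p]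
    nlinarith
  have htri : ‖θ - θt‖ ≤ ‖θ - p‖ + ε := by
    calc ‖θ - θt‖ ≤ ‖θ - p‖ + ‖p - θt‖ := norm_sub_le_norm_sub_add_norm_sub θ p θt
    _ ≤ ‖θ - p‖ + ε := by rw [norm_sub_rev p θt]; linarith
  rw [show (6:ℝ) * ε = 6 * ε by ring, ← Real.sqrt_sq (norm_nonneg (θ - θt))]
  apply Real.sqrt_le_sqrt
  nlinarith [norm_nonneg (θ - p), norm_nonneg (θ - θt), sq_nonneg (‖θ - p‖ - 2 * ε), sq_nonneg ε, sq_nonneg (‖θ - p‖ * ε)]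
end
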